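/- arXiv:2509.05765 — 3 statements merged into one kernel-verified Lean document; each statement's English description precedes it below -/
import Mathlib

section
/- Let f : R^n → R be differentiable with L-Lipschitz gradient on an open convex set O, and let g : R^n → R ∪ {∞} be proper and prox-bounded with threshold γ_g > 0. Define the forward–backward envelope F_γ(x) := inf_z { f(x) + ⟨∇f(x), z − x⟩ + (1/(2γ))‖z − x‖² + g(z) } and F := f + g. Then for every γ ∈ (0, γ_g) and every x ∈ dom g: (i) F_γ(x) ≤ F(x), and (ii) for every z ∈ argmin of the defining infimum (i.e., z ∈ T_γ(x)), F(z) ≤ F_γ(x) − ((1 − γL)/(2γ))‖z − x‖². -/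
/-!
Part (i) is the value of the infimum at `z = x`. For (ii), a minimizer `z` realizes the
infimum, so `F_γ(x) - F(z)` is the gap between `f(z)` and its quadratic model
`f(x) + ⟪∇f(x), z - x⟫ + ‖z - x‖² / (2γ)`; the descent lemma bounds that gap from below by
`(1/γ - L) ‖z - x‖² / 2`.
-/

open scoped RealInnerProductSpace

section DescentLemma

variable {E : Type*} [NormedAddCommGroup E] [InnerProductSpace ℝ E] [CompleteSpace E]
  {f : E → ℝ} {gradf : E → E}

lemma HasGradientAt.hasDerivAt_comp_add_smul {x v : E} {t : ℝ}
    (h : HasGradientAt f (gradf (x + t • v)) (x + t • v)) :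
    HasDerivAt (fun s : ℝ => f (x + s • v)) ⟪gradf (x + t • v), v⟫ t := by
  have hline : HasDerivAt (fun s : ℝ => x + s • v) v t := by
    simpa using ((hasDerivAt_id t).smul_const v).const_add x
  exact h.hasFDerivAt.comp_hasDerivAt t hline

theorem le_add_inner_add_sq_of_lipschitz_gradient {L : ℝ}
    (hgrad : ∀ x, HasGradientAt f (gradf x) x)
    (hL : ∀ x y, ‖gradf x - gradf y‖ ≤ L * ‖x - y‖) (x z : E) :
    f z ≤ f x + ⟪gradf x, z - x⟫ + L / 2 * ‖z - x‖ ^ 2 := by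
  set v := z - x
  have hderiv (t : ℝ) := (hgrad (x + t • v)).hasDerivAt_comp_add_smul
  have hmodel (t : ℝ) : HasDerivAt (fun s : ℝ => f x + s * ⟪gradf x, v⟫ + L / 2 * s ^ 2 * ‖v‖ ^ 2)
      (⟪gradf x, v⟫ + L * t * ‖v‖ ^ 2) t := by
    refine (((hasDerivAt_mul_const ⟪gradf x, v⟫).const_add (f x)).add
      (((hasDerivAt_pow 2 t).const_mul (L / 2)).mul_const (‖v‖ ^ 2))).congr_deriv ?_
    simp only [Nat.cast_ofNat, Nat.add_one_sub_one, pow_one]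
    ring
  have hslope (t : ℝ) (ht : 0 ≤ t) : ⟪gradf (x + t • v), v⟫ ≤ ⟪gradf x, v⟫ + L * t * ‖v‖ ^ 2 :=
    calc ⟪gradf (x + t • v), v⟫
        = ⟪gradf x, v⟫ + ⟪gradf (x + t • v) - gradf x, v⟫ := by rw [inner_sub_left]; ring
      _ ≤ ⟪gradf x, v⟫ + ‖gradf (x + t • v) - gradf x‖ * ‖v‖ := by
          gcongr; exact real_inner_le_norm _ _
      _ ≤ ⟪gradf x, v⟫ + L * ‖t • v‖ * ‖v‖ := by
          gcongr; simpa using hL (x + t • v) x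
      _ = ⟪gradf x, v⟫ + L * t * ‖v‖ ^ 2 := by rw [norm_smul, Real.norm_of_nonneg ht]; ring
  have hbound := image_le_of_deriv_right_le_deriv_boundary (a := 0) (b := 1)
    (fun t _ => (hderiv t).continuousAt.continuousWithinAt) (fun t _ => (hderiv t).hasDerivWithinAt)
    (by simp) (fun t _ => (hmodel t).continuousAt.continuousWithinAt)
    (fun t _ => (hmodel t).hasDerivWithinAt) (fun t ht => hslope t ht.1)
    (Set.right_mem_Icc.2 zero_le_one)
  simpa [v] using hbound

end DescentLemma

-- Holds for infinite `e` too, since `⊥ + ⊤ = ⊥` and `⊤ - c = ⊤` in `EReal`.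
lemma EReal.coe_add_le_add_sub_of_le_sub {p a c : ℝ} (h : p ≤ a - c) (e : EReal) :
    (p : EReal) + e ≤ (a + e) - c := by
  induction e using EReal.rec with
  | bot => simp
  | top => simp
  | coe e =>
    norm_cast
    linarith

theorem fbe_basic_general (n : ℕ) (f : EuclideanSpace ℝ (Fin n) → ℝ)
    (gradf : EuclideanSpace ℝ (Fin n) → EuclideanSpace ℝ (Fin n)) (L γg : ℝ)
    (hgrad : ∀ x, HasGradientAt f (gradf x) x)
    (hL : ∀ x y, ‖gradf x - gradf y‖ ≤ L * ‖x - y‖)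
    (g : EuclideanSpace ℝ (Fin n) → EReal)
    (Fγ : ℝ → EuclideanSpace ℝ (Fin n) → EReal)
    (hFγ : ∀ γ x, Fγ γ x = ⨅ z, ((f x + (inner ℝ (gradf x) (z - x) : ℝ)
        + 1 / (2 * γ) * ‖z - x‖ ^ 2 : ℝ) : EReal) + g z)
    (γ : ℝ) (hγ : γ ∈ Set.Ioo (0 : ℝ) γg)
    (x : EuclideanSpace ℝ (Fin n)) :
    Fγ γ x ≤ (f x : EReal) + g x ∧
    ∀ z : EuclideanSpace ℝ (Fin n),
      (∀ z', ((f x + (inner ℝ (gradf x) (z - x) : ℝ) + 1 / (2 * γ) * ‖z - x‖ ^ 2 : ℝ) : EReal) + g z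
        ≤ ((f x + (inner ℝ (gradf x) (z' - x) : ℝ) + 1 / (2 * γ) * ‖z' - x‖ ^ 2 : ℝ) : EReal) + g z') →
      (f z : EReal) + g z ≤ Fγ γ x - (((1 - γ * L) / (2 * γ) * ‖z - x‖ ^ 2 : ℝ) : EReal) := by
  refine ⟨?_, fun z hz => ?_⟩
  · rw [hFγ]
    exact (iInf_le _ x).trans_eq (by simp)
  · rw [hFγ, le_antisymm (iInf_le _ z) (le_iInf hz)]
    apply EReal.coe_add_le_add_sub_of_le_sub
    have hdescent := le_add_inner_add_sq_of_lipschitz_gradient hgrad hL x z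
    have hγ0 : γ ≠ 0 := hγ.1.ne'
    have hcoeff : 1 / (2 * γ) * ‖z - x‖ ^ 2 - (1 - γ * L) / (2 * γ) * ‖z - x‖ ^ 2
        = L / 2 * ‖z - x‖ ^ 2 := by
      field_simp
      ring
    linarith

/-- basic properties of the forward–backward envelope. -/
theorem fbe_basic (n : ℕ) (f : EuclideanSpace ℝ (Fin n) → ℝ)
    (gradf : EuclideanSpace ℝ (Fin n) → EuclideanSpace ℝ (Fin n)) (L γg : ℝ)
    (hgrad : ∀ x, HasGradientAt f (gradf x) x)
    (hL : ∀ x y, ‖gradf x - gradf y‖ ≤ L * ‖x - y‖)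
    (g : EuclideanSpace ℝ (Fin n) → EReal)
    (hgproper : ∃ z, g z ≠ ⊤) (hgbot : ∀ z, g z ≠ ⊥) (hγg : 0 < γg)
    (Fγ : ℝ → EuclideanSpace ℝ (Fin n) → EReal)
    (hFγ : ∀ γ x, Fγ γ x = ⨅ z, ((f x + (inner ℝ (gradf x) (z - x) : ℝ)
        + 1 / (2 * γ) * ‖z - x‖ ^ 2 : ℝ) : EReal) + g z)
    (hproxbdd : ∀ γ ∈ Set.Ioo (0 : ℝ) γg, ∀ x, Fγ γ x ≠ ⊥)
    (γ : ℝ) (hγ : γ ∈ Set.Ioo (0 : ℝ) γg)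
    (x : EuclideanSpace ℝ (Fin n)) (hx : g x ≠ ⊤) :
    Fγ γ x ≤ (f x : EReal) + g x ∧
    ∀ z : EuclideanSpace ℝ (Fin n),
      (∀ z', ((f x + (inner ℝ (gradf x) (z - x) : ℝ) + 1 / (2 * γ) * ‖z - x‖ ^ 2 : ℝ) : EReal) + g z
        ≤ ((f x + (inner ℝ (gradf x) (z' - x) : ℝ) + 1 / (2 * γ) * ‖z' - x‖ ^ 2 : ℝ) : EReal) + g z') →
      (f z : EReal) + g z ≤ Fγ γ x - (((1 - γ * L) / (2 * γ) * ‖z - x‖ ^ 2 : ℝ) : EReal) :=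
  fbe_basic_general n f gradf L γg hgrad hL g Fγ hFγ γ hγ x
end

section
/- Let X* ⊂ R^n be nonempty and closed, x* ∈ X*, and suppose: (a) quadratic growth: there exist κ₂ > 0 and a neighborhood of x* on which F_*(x) − F_*(x*) ≥ κ₂ dist(x, X*)²; (b) envelope upper bound: F_*(y) − F_*(x*) ≤ L̃ dist(y, X*)² for y near x*; (c) the chain of inequalities F_*(x^k) ≤ F(x^k) ≤ F_{γ_k}(y^k) ≤ F_*(y^k) for all large k. Then dist(x^k, X*) ≤ √(L̃/κ₂) · dist(y^k, X*) for all large k. Consequently, if dist(y^{k+1}, X*) ≤ c̃ dist(x^k, X*)^{1+τ} with c̃ > 0, τ ∈ (0,1), then limsup_k dist(y^{k+1}, X*)/dist(y^k, X*)^{1+τ} ≤ c̃ (L̃/κ₂)^{(1+τ)/2}, i.e., dist(y^k, X*) → 0 superlinearly with order 1+τ. -/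
/-!
Along the iterates, `F_*(x^k) ≤ F_*(y^k)`, so quadratic growth at `x^k` and the quadratic upper
bound at `y^k` give `κ₂ dist(x^k, X*)² ≤ L̃ dist(y^k, X*)²`. Feeding
`dist(x^k, X*) ≤ √(L̃/κ₂) dist(y^k, X*)` into the step estimate bounds every quotient
`dist(y^{k+1}, X*) / dist(y^k, X*)^{1+τ}` eventually by `c̃ (L̃/κ₂)^{(1+τ)/2}`.
-/

open Filter Metric Topology

lemma le_sqrt_div_mul_of_mul_sq_le {κ L a b : ℝ} (hκ : 0 < κ) (ha : 0 ≤ a) (hb : 0 ≤ b)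
    (h : κ * a ^ 2 ≤ L * b ^ 2) : a ≤ √(L / κ) * b := by
  have hsq : a ^ 2 ≤ L / κ * b ^ 2 := by
    rw [div_mul_eq_mul_div, le_div_iff₀ hκ]
    linarith
  calc a = √(a ^ 2) := (Real.sqrt_sq ha).symm
    _ ≤ √(L / κ * b ^ 2) := Real.sqrt_le_sqrt hsq
    _ = √(L / κ) * b := by rw [Real.sqrt_mul' _ (sq_nonneg b), Real.sqrt_sq hb]

theorem eventually_infDist_le_of_quadratic_bounds {α ι : Type*} [PseudoMetricSpace α]
    {l : Filter ι} {s : Set α} {x₀ : α} {f : α → ℝ} {κ L : ℝ} (hκ : 0 < κ) {x y : ι → α}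
    (hx : Tendsto x l (𝓝 x₀)) (hy : Tendsto y l (𝓝 x₀))
    (hgrowth : ∀ᶠ z in 𝓝 x₀, κ * infDist z s ^ 2 ≤ f z - f x₀)
    (hupper : ∀ᶠ z in 𝓝 x₀, f z - f x₀ ≤ L * infDist z s ^ 2)
    (hxy : ∀ᶠ k in l, f (x k) ≤ f (y k)) :
    ∀ᶠ k in l, infDist (x k) s ≤ √(L / κ) * infDist (y k) s := by
  filter_upwards [hx.eventually hgrowth, hy.eventually hupper, hxy] with k hxk hyk hk
  exact le_sqrt_div_mul_of_mul_sq_le hκ infDist_nonneg infDist_nonneg (by linarith)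

theorem limsup_div_rpow_le_of_le_mul_rpow {ι : Type*} {l : Filter ι} [l.NeBot] {u v w : ι → ℝ}
    {c s p : ℝ} (hc : 0 ≤ c) (hs : 0 ≤ s) (hp : 0 ≤ p)
    (hu : ∀ i, 0 ≤ u i) (hv : ∀ i, 0 ≤ v i) (hw : ∀ i, 0 ≤ w i)
    (huv : ∀ᶠ i in l, u i ≤ c * v i ^ p) (hvw : ∀ᶠ i in l, v i ≤ s * w i) :
    limsup (fun i => u i / w i ^ p) l ≤ c * s ^ p := by
  refine limsup_le_of_le
    (isCoboundedUnder_le_of_le l fun i => div_nonneg (hu i) (Real.rpow_nonneg (hw i) p)) ?_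
  filter_upwards [huv, hvw] with i hui hvi
  refine div_le_of_le_mul₀ (Real.rpow_nonneg (hw i) p) (by positivity) ?_
  calc u i ≤ c * v i ^ p := hui
    _ ≤ c * (s * w i) ^ p := by gcongr; exact hv i
    _ = c * s ^ p * w i ^ p := by rw [Real.mul_rpow hs (hw i), mul_assoc]

theorem superlinear_distance_general (n : ℕ) (Xs : Set (EuclideanSpace ℝ (Fin n)))
    (xstar : EuclideanSpace ℝ (Fin n))
    (Fs F : EuclideanSpace ℝ (Fin n) → ℝ)
    (Fγ : ℕ → EuclideanSpace ℝ (Fin n) → ℝ)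
    (κ2 Lt : ℝ) (hκ2 : 0 < κ2) (hLt : 0 < Lt)
    (x y : ℕ → EuclideanSpace ℝ (Fin n))
    (hxconv : Filter.Tendsto x Filter.atTop (nhds xstar))
    (hyconv : Filter.Tendsto y Filter.atTop (nhds xstar))
    (ha : ∃ ε > (0 : ℝ), ∀ z ∈ Metric.ball xstar ε,
      κ2 * Metric.infDist z Xs ^ 2 ≤ Fs z - Fs xstar)
    (hb : ∃ ε > (0 : ℝ), ∀ z ∈ Metric.ball xstar ε,
      Fs z - Fs xstar ≤ Lt * Metric.infDist z Xs ^ 2)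
    (hc : ∀ᶠ k in Filter.atTop,
      Fs (x k) ≤ F (x k) ∧ F (x k) ≤ Fγ k (y k) ∧ Fγ k (y k) ≤ Fs (y k)) :
    (∀ᶠ k in Filter.atTop,
      Metric.infDist (x k) Xs ≤ Real.sqrt (Lt / κ2) * Metric.infDist (y k) Xs) ∧
    ∀ ctil τ : ℝ, 0 < ctil → τ ∈ Set.Ioo (0 : ℝ) 1 →
      (∀ᶠ k in Filter.atTop,
        Metric.infDist (y (k + 1)) Xs ≤ ctil * Metric.infDist (x k) Xs ^ (1 + τ)) →
      Filter.limsup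
        (fun k => Metric.infDist (y (k + 1)) Xs / Metric.infDist (y k) Xs ^ (1 + τ))
        Filter.atTop ≤ ctil * (Lt / κ2) ^ ((1 + τ) / 2) := by
  have hxy : ∀ᶠ k in atTop, Fs (x k) ≤ Fs (y k) :=
    hc.mono fun k ⟨h₁, h₂, h₃⟩ => h₁.trans (h₂.trans h₃)
  have hdist := eventually_infDist_le_of_quadratic_bounds hκ2 hxconv hyconv
    (eventually_nhds_iff_ball.2 ha) (eventually_nhds_iff_ball.2 hb) hxy
  refine ⟨hdist, fun ctil τ hctil hτ hstep => ?_⟩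
  rw [Real.rpow_div_two_eq_sqrt _ (by positivity)]
  exact limsup_div_rpow_le_of_le_mul_rpow hctil.le (Real.sqrt_nonneg _) (by linarith [hτ.1])
    (fun _ => infDist_nonneg) (fun _ => infDist_nonneg) (fun _ => infDist_nonneg) hstep hdist

/-- superlinear convergence of the distance to the stationary set. -/
theorem superlinear_distance (n : ℕ) (Xs : Set (EuclideanSpace ℝ (Fin n)))
    (hXs : Xs.Nonempty) (hXsc : IsClosed Xs)
    (xstar : EuclideanSpace ℝ (Fin n)) (hxstar : xstar ∈ Xs)
    (Fs F : EuclideanSpace ℝ (Fin n) → ℝ)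
    (Fγ : ℕ → EuclideanSpace ℝ (Fin n) → ℝ)
    (κ2 Lt : ℝ) (hκ2 : 0 < κ2) (hLt : 0 < Lt)
    (x y : ℕ → EuclideanSpace ℝ (Fin n))
    (hxconv : Filter.Tendsto x Filter.atTop (nhds xstar))
    (hyconv : Filter.Tendsto y Filter.atTop (nhds xstar))
    (ha : ∃ ε > (0 : ℝ), ∀ z ∈ Metric.ball xstar ε,
      κ2 * Metric.infDist z Xs ^ 2 ≤ Fs z - Fs xstar)
    (hb : ∃ ε > (0 : ℝ), ∀ z ∈ Metric.ball xstar ε,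
      Fs z - Fs xstar ≤ Lt * Metric.infDist z Xs ^ 2)
    (hc : ∀ᶠ k in Filter.atTop,
      Fs (x k) ≤ F (x k) ∧ F (x k) ≤ Fγ k (y k) ∧ Fγ k (y k) ≤ Fs (y k)) :
    (∀ᶠ k in Filter.atTop,
      Metric.infDist (x k) Xs ≤ Real.sqrt (Lt / κ2) * Metric.infDist (y k) Xs) ∧
    ∀ ctil τ : ℝ, 0 < ctil → τ ∈ Set.Ioo (0 : ℝ) 1 →
      (∀ᶠ k in Filter.atTop,
        Metric.infDist (y (k + 1)) Xs ≤ ctil * Metric.infDist (x k) Xs ^ (1 + τ)) →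
      Filter.limsup
        (fun k => Metric.infDist (y (k + 1)) Xs / Metric.infDist (y k) Xs ^ (1 + τ))
        Filter.atTop ≤ ctil * (Lt / κ2) ^ ((1 + τ) / 2) :=
  superlinear_distance_general n Xs xstar Fs F Fγ κ2 Lt hκ2 hLt x y hxconv hyconv ha hb hc
end

section
/- Let S ⊂ R^n be a linear subspace and Ω ⊂ R^n a closed convex set, f : R^n → R differentiable, γ > 0. Suppose x ∈ R^n minimizes z ↦ (1/(2γ))‖z − w‖² + g(z) over R^n, where g(z) = λ‖z‖₀ + λ₀‖Bz‖₀ + δ_Ω(z) and w := y − γ∇f(y), and suppose every z ∈ S ∩ Ω satisfies g(z) ≤ g(x) (e.g., because S = S(x) as defined via joint supports). If x ∈ S ∩ Ω, then x = proj_{S ∩ Ω}(w), the Euclidean projection of w onto S ∩ Ω. -/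
/-!
Since `g` is no larger than `g x` on `S ∩ Ω`, optimality of `x` for the proximal subproblem
says that `x` minimizes `‖· - w‖` over the convex set `S ∩ Ω`. In a strictly convex space a
second minimizer `u ≠ x` is impossible: the midpoint of `x` and `u` would be strictly closer
to `w`.
-/

section StrictConvex

variable {E : Type*} [NormedAddCommGroup E] [NormedSpace ℝ E] [StrictConvexSpace ℝ E]

theorem Convex.norm_sub_lt_of_isMinOn {K : Set E} (hK : Convex ℝ K) {x w : E} (hx : x ∈ K)
    (hmin : IsMinOn (‖· - w‖) K x) {u : E} (hu : u ∈ K) (hne : u ≠ x) :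
    ‖x - w‖ < ‖u - w‖ := by
  by_contra! hux
  have hmid : (1 / 2 : ℝ) • x + (1 / 2 : ℝ) • u ∈ K :=
    hK hx hu (by norm_num) (by norm_num) (by norm_num)
  have hcloser : ‖(1 / 2 : ℝ) • x + (1 / 2 : ℝ) • u - w‖ < ‖x - w‖ := by
    rw [← mem_ball_iff_norm]
    exact combo_mem_ball_of_ne (mem_closedBall_iff_norm.2 le_rfl)
      (mem_closedBall_iff_norm.2 hux) hne.symm (by norm_num) (by norm_num) (by norm_num)
  exact (hmin hmid).not_gt hcloser

end StrictConvex

theorem isMinOn_of_forall_add_le {α : Type*} {φ : α → ℝ} {g : α → EReal} {K : Set α} {x : α}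
    (hgx_top : g x ≠ ⊤) (hgx_bot : g x ≠ ⊥) (hopt : ∀ z, (φ x : EReal) + g x ≤ φ z + g z)
    (hgle : ∀ z ∈ K, g z ≤ g x) : IsMinOn φ K x := by
  intro z hz
  have h := (hopt z).trans (add_le_add_right (hgle z hz) _)
  rw [← EReal.coe_toReal hgx_top hgx_bot, ← EReal.coe_add, ← EReal.coe_add,
    EReal.coe_le_coe_iff] at h
  exact le_of_add_le_add_right h

theorem prox_is_projection_general (n : ℕ)
    (S : Submodule ℝ (EuclideanSpace ℝ (Fin n)))
    (Ω : Set (EuclideanSpace ℝ (Fin n))) (hΩconv : Convex ℝ Ω)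
    (γ : ℝ) (hγ : 0 < γ)
    (g : EuclideanSpace ℝ (Fin n) → EReal)
    (x w : EuclideanSpace ℝ (Fin n))
    (hgx : g x ≠ ⊤) (hgbot : ∀ z, g z ≠ ⊥)
    (hopt : ∀ z, ((1 / (2 * γ) * ‖x - w‖ ^ 2 : ℝ) : EReal) + g x
      ≤ ((1 / (2 * γ) * ‖z - w‖ ^ 2 : ℝ) : EReal) + g z)
    (hgle : ∀ z ∈ (S : Set (EuclideanSpace ℝ (Fin n))) ∩ Ω, g z ≤ g x)
    (hxS : x ∈ (S : Set (EuclideanSpace ℝ (Fin n))) ∩ Ω) :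
    ∀ u ∈ (S : Set (EuclideanSpace ℝ (Fin n))) ∩ Ω, u ≠ x → ‖x - w‖ < ‖u - w‖ := by
  have hmin_sq : IsMinOn (fun z ↦ 1 / (2 * γ) * ‖z - w‖ ^ 2) ((S : Set _) ∩ Ω) x :=
    isMinOn_of_forall_add_le hgx (hgbot x) hopt hgle
  have hmin : IsMinOn (‖· - w‖) ((S : Set _) ∩ Ω) x := fun z hz ↦ by
    have h := le_of_mul_le_mul_left (α := ℝ) (hmin_sq hz) (by positivity)
    exact (pow_le_pow_iff_left₀ (norm_nonneg _) (norm_nonneg _) two_ne_zero).1 h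
  intro u hu hne
  exact (S.convex.inter hΩconv).norm_sub_lt_of_isMinOn hxS hmin hu hne

/-- a proximal point whose value dominates `g` on `S ∩ Ω` and lies
in `S ∩ Ω` is the projection of the forward point onto `S ∩ Ω`. -/
theorem prox_is_projection (n : ℕ)
    (S : Submodule ℝ (EuclideanSpace ℝ (Fin n)))
    (Ω : Set (EuclideanSpace ℝ (Fin n))) (hΩc : IsClosed Ω) (hΩconv : Convex ℝ Ω)
    (f : EuclideanSpace ℝ (Fin n) → ℝ)
    (gradf : EuclideanSpace ℝ (Fin n) → EuclideanSpace ℝ (Fin n))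
    (γ : ℝ) (hγ : 0 < γ)
    (hgrad : ∀ v, HasGradientAt f (gradf v) v)
    (g : EuclideanSpace ℝ (Fin n) → EReal)
    (y x w : EuclideanSpace ℝ (Fin n)) (hw : w = y - γ • gradf y)
    (hgx : g x ≠ ⊤) (hgbot : ∀ z, g z ≠ ⊥)
    (hopt : ∀ z, ((1 / (2 * γ) * ‖x - w‖ ^ 2 : ℝ) : EReal) + g x
      ≤ ((1 / (2 * γ) * ‖z - w‖ ^ 2 : ℝ) : EReal) + g z)
    (hgle : ∀ z ∈ (S : Set (EuclideanSpace ℝ (Fin n))) ∩ Ω, g z ≤ g x)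
    (hxS : x ∈ (S : Set (EuclideanSpace ℝ (Fin n))) ∩ Ω) :
    ∀ u ∈ (S : Set (EuclideanSpace ℝ (Fin n))) ∩ Ω, u ≠ x → ‖x - w‖ < ‖u - w‖ :=
  prox_is_projection_general n S Ω hΩconv γ hγ g x w hgx hgbot hopt hgle hxS
end
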